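/- Let Δ be a simplicial complex on V, and let G = (g₁,…,gₙ) with every gᵢ a P-position and (Pl(g₁),…,Pl(gₙ)) a P-position of simplicial Nim on Δ. Then every option Δ(G') of the simplicial emperor sum Δ(G) fails at least one of the two conditions: either some g'ᵢ is an N-position, or (Pl(g'₁),…,Pl(g'ₙ)) is an N-position of simplicial Nim on Δ. -/
import Mathlib


universe u

/-- N-positions of an impartial game with move relation `r`:
`g` is an N-position iff some option of `g` is a P-position
(i.e. all of whose options are again N-positions). -/
inductive NPos {α : Type u} (r : α → α → Prop) : α → Prop
  | intro (g g' : α) (hm : r g g') (hp : ∀ x, r g' x → NPos r x) : NPos r g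

/-- P-position: every option is an N-position (terminal positions are P-positions). -/
def PPos {α : Type u} (r : α → α → Prop) (g : α) : Prop :=
  ∀ g', r g g' → NPos r g'

/-- The P-position length: `0` for terminal positions, and otherwise
`sup {Pl g' + 1 | g' a P-position strictly following g}` (with `sSup ∅ = 0`). -/
noncomputable def Pl {α : Type u} (r : α → α → Prop)
    (h : WellFounded (Function.swap r)) : α → ℕ :=
  h.transGen.fix fun _g ih =>
    sSup {m | ∃ g', ∃ hg : Relation.TransGen (Function.swap r) g' _g,
      PPos r g' ∧ m = ih g' hg + 1}

/-- Simplicial nim move on the complex `Δ`: choose a nonempty face `F ∈ Δ` and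
remove a positive number of stones from every vertex of `F`. -/
def SNimMove {n : ℕ} (Δ : Set (Finset (Fin n))) (a b : Fin n → ℕ) : Prop :=
  ∃ F ∈ Δ, F.Nonempty ∧ (∀ v ∈ F, b v < a v) ∧ ∀ v ∉ F, b v = a v

/-- Simplicial emperor sum move: choose a face `F ∈ Δ`, replace each component on a
vertex of `F` by a strict follower, each other component by itself or an option,
with at least one component changed. -/
def SEmpMove {n : ℕ} {α : Fin n → Type u} (Δ : Set (Finset (Fin n)))
    (r : ∀ i, α i → α i → Prop) (G G' : ∀ i, α i) : Prop :=
  ∃ F ∈ Δ, (∀ i ∈ F, Relation.TransGen (r i) (G i) (G' i)) ∧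
    (∀ i ∉ F, G' i = G i ∨ r i (G i) (G' i)) ∧ G' ≠ G

/-- Emperor sum move: choose one index `i`, replace `G i` by a strict follower,
and every other component by itself or one of its options. -/
def EmpMove {n : ℕ} {α : Fin n → Type u} (r : ∀ i, α i → α i → Prop)
    (G G' : ∀ i, α i) : Prop :=
  ∃ i, Relation.TransGen (r i) (G i) (G' i) ∧
    ∀ j, j ≠ i → (G' j = G j ∨ r j (G j) (G' j))

lemma npos_or_ppos {α : Type u} (r : α → α → Prop)
    (h : WellFounded (Function.swap r)) : ∀ g, NPos r g ∨ PPos r g := by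
  intro g
  induction g using h.induction with
  | _ g ih =>
    by_cases hall : ∀ g', r g g' → NPos r g'
    · exact Or.inr hall
    · push_neg at hall
      obtain ⟨g', hr, hn⟩ := hall
      rcases ih g' hr with h1 | h2
      · exact absurd h1 hn
      · exact Or.inl (NPos.intro g g' hr h2)

lemma Pl_eq {α : Type u} (r : α → α → Prop) (h : WellFounded (Function.swap r))
    (g : α) :
    Pl r h g = sSup {m | ∃ g', ∃ _ : Relation.TransGen (Function.swap r) g' g,
      PPos r g' ∧ m = Pl r h g' + 1} := by
  conv_lhs => rw [Pl, WellFounded.fix_eq]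
  rfl

lemma Pl_succ_le {α : Type u} (r : α → α → Prop)
    (h : WellFounded (Function.swap r))
    (hfin : ∀ x : α, {y | Relation.TransGen r x y}.Finite)
    (g g' : α) (hm : Relation.TransGen r g g') (hp : PPos r g') :
    Pl r h g' + 1 ≤ Pl r h g := by
  rw [Pl_eq r h g]
  apply le_csSup
  · apply Set.Finite.bddAbove
    apply Set.Finite.subset ((hfin g).image (fun y => Pl r h y + 1))
    rintro m ⟨g'', hg, _, rfl⟩
    exact ⟨g'', Relation.transGen_swap.mp hg, rfl⟩
  · exact ⟨g', Relation.transGen_swap.mpr hm, hp, rfl⟩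

/-- Claim 1: if every component of `G` is a P-position and the tuple of P-position
lengths is a P-position of simplicial nim on `Δ`, then every option `G'` of the
simplicial emperor sum fails one of the two conditions: some component of `G'` is an
N-position, or the tuple of its P-position lengths is an N-position of simplicial nim. -/
theorem sempSum_option_fails (n : ℕ) (α : Fin n → Type u)
    (r : ∀ i, α i → α i → Prop)
    (hwf : ∀ i, WellFounded (Function.swap (r i)))
    (hfin : ∀ i, ∀ x : α i, {y | Relation.TransGen (r i) x y}.Finite)
    (Δ : Set (Finset (Fin n)))
    (hdown : ∀ F ∈ Δ, ∀ G ⊆ F, G ∈ Δ)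
    (hsingle : ∀ v : Fin n, ({v} : Finset (Fin n)) ∈ Δ)
    (G : ∀ i, α i)
    (hP : ∀ i, PPos (r i) (G i))
    (hPl : PPos (SNimMove Δ) (fun i => Pl (r i) (hwf i) (G i)))
    (G' : ∀ i, α i) (hmove : SEmpMove Δ r G G') :
    (∃ i, NPos (r i) (G' i)) ∨
      NPos (SNimMove Δ) (fun i => Pl (r i) (hwf i) (G' i)) := by
  obtain ⟨F, hF, hin, hout, hne⟩ := hmove
  by_cases hN : ∃ i, NPos (r i) (G' i)
  · exact Or.inl hN
  push_neg at hN
  right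
  have hP' : ∀ i, PPos (r i) (G' i) := fun i =>
    (npos_or_ppos (r i) (hwf i) (G' i)).resolve_left (hN i)
  have heq : ∀ i ∉ F, G' i = G i := by
    intro i hi
    rcases hout i hi with h | h
    · exact h
    · exact absurd (hP i _ h) (hN i)
  have hlt : ∀ i ∈ F, Pl (r i) (hwf i) (G' i) < Pl (r i) (hwf i) (G i) :=
    fun i hi =>
      Nat.lt_of_succ_le (Pl_succ_le (r i) (hwf i) (hfin i) _ _ (hin i hi) (hP' i))
  have hFne : F.Nonempty := by
    by_contra h
    rw [Finset.not_nonempty_iff_eq_empty] at h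
    exact hne (funext fun i => heq i (by simp [h]))
  exact hPl _ ⟨F, hF, hFne, hlt, fun i hi => by simp only [heq i hi]⟩
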